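/- Assume ψ is bounded from below and V(x) = ½‖∇ψ(x)‖² is convex. Then ψ is convex. -/

import Mathlib

/-!
Convexity of `ψ` is monotonicity of `∇ψ`. Suppose `⟪∇ψ x - ∇ψ y, x - y⟫ = -c < 0` and run the
gradient flows `X`, `Y` of `ψ` from `x` and `y`. They exist for all time because `ψ` is bounded
below: escaping in finite time needs infinite length, which costs infinite decrease of `ψ`.
With `G = ∇ψ X - ∇ψ Y`, `m = ⟪G, X - Y⟫` and `r = ½‖X - Y‖²`, monotonicity of
`∇V = ∇²ψ ∇ψ` gives `m' ≤ -‖G‖²` and `r' = -m`. Hence `m` stays below `-c`, `m² / r` is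
nondecreasing, and `‖G‖² ≥ m² / (2 r) ≥ c² / ‖x - y‖²` for all time. But `ψ X + ψ Y` decreases
at rate `‖∇ψ X‖² + ‖∇ψ Y‖² ≥ ‖G‖² / 2` and is bounded below, which is absurd for large time.
-/

open Filter Set Metric InnerProductSpace AffineMap
open scoped Topology RealInnerProductSpace

section GradientCalculus

variable {H : Type*} [NormedAddCommGroup H] [InnerProductSpace ℝ H] [CompleteSpace H]

lemma ContDiff.gradient {ψ : H → ℝ} {n : WithTop ℕ∞} (hψ : ContDiff ℝ (n + 1) ψ) :
    ContDiff ℝ n (gradient ψ) :=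
  (toDual ℝ H).symm.toContinuousLinearEquiv.contDiff.comp (hψ.fderiv_right le_rfl)

lemma inner_fderiv_gradient_comm {ψ : H → ℝ} (hψ : ContDiff ℝ 2 ψ) (x u w : H) :
    ⟪fderiv ℝ (gradient ψ) x u, w⟫ = ⟪fderiv ℝ (gradient ψ) x w, u⟫ := by
  have hD : DifferentiableAt ℝ (fderiv ℝ ψ) x :=
    (hψ.fderiv_right (m := 1) le_rfl).differentiable one_ne_zero x
  have key : ∀ a b, ⟪fderiv ℝ (gradient ψ) x a, b⟫ = fderiv ℝ (fderiv ℝ ψ) x a b := by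
    intro a b
    have h : HasFDerivAt (gradient ψ)
        ((toDual ℝ H).symm.toContinuousLinearEquiv.toContinuousLinearMap.comp
          (fderiv ℝ (fderiv ℝ ψ) x)) x :=
      (toDual ℝ H).symm.toContinuousLinearEquiv.hasFDerivAt.comp x hD.hasFDerivAt
    simp [h.fderiv, toDual_symm_apply]
  rw [key, key, hψ.contDiffAt.isSymmSndFDerivAt (by simp)]

lemma hasGradientAt_half_norm_sq_gradient {ψ : H → ℝ} (hψ : ContDiff ℝ 2 ψ) (x : H) :
    HasGradientAt (fun z => (1 / 2 : ℝ) * ‖gradient ψ z‖ ^ 2)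
      (fderiv ℝ (gradient ψ) x (gradient ψ x)) x := by
  have hg := ((ContDiff.gradient (n := 1) hψ).differentiable one_ne_zero x).hasFDerivAt
  rw [hasGradientAt_iff_hasFDerivAt]
  refine (hg.norm_sq.const_mul (1 / 2 : ℝ)).congr_fderiv ?_
  ext u
  simp only [one_div, smul_apply, ContinuousLinearMap.comp_apply, coe_innerSL_apply, nsmul_eq_mul,
    Nat.cast_ofNat, smul_eq_mul, toDual_apply_apply]
  rw [real_inner_comm, inner_fderiv_gradient_comm hψ]
  ring

end GradientCalculus

section MonotoneGradient

variable {H : Type*} [NormedAddCommGroup H] [InnerProductSpace ℝ H] [CompleteSpace H]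
  {f : H → ℝ} {f' : H → H}

lemma hasDerivAt_comp_lineMap (hf : ∀ x, HasGradientAt f (f' x) x) (x y : H) (t : ℝ) :
    HasDerivAt (fun s : ℝ => f (lineMap y x s)) ⟪f' (lineMap y x t), x - y⟫ t :=
  (hf _).hasFDerivAt.comp_hasDerivAt t hasDerivAt_lineMap

lemma ConvexOn.inner_gradient_sub_nonneg (hconv : ConvexOn ℝ univ f)
    (hf : ∀ x, HasGradientAt f (f' x) x) (x y : H) : 0 ≤ ⟪f' x - f' y, x - y⟫ := by
  have hq : ConvexOn ℝ univ (fun s : ℝ => f (lineMap y x s)) :=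
    hconv.comp_affineMap (lineMap y x)
  have h0 := hq.le_slope_of_hasDerivAt (mem_univ 0) (mem_univ 1) one_pos
    (hasDerivAt_comp_lineMap hf x y 0)
  have h1 := hq.slope_le_of_hasDerivAt (mem_univ 0) (mem_univ 1) one_pos
    (hasDerivAt_comp_lineMap hf x y 1)
  simp only [lineMap_apply_zero, lineMap_apply_one] at h0 h1
  rw [inner_sub_left]
  linarith

lemma convexOn_univ_of_inner_gradient_sub_nonneg (hf : ∀ x, HasGradientAt f (f' x) x)
    (hmono : ∀ x y, 0 ≤ ⟪f' x - f' y, x - y⟫) : ConvexOn ℝ univ f := by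
  refine ⟨convex_univ, fun x _ y _ a b ha hb hab => ?_⟩
  have hq' := hasDerivAt_comp_lineMap hf x y
  have hq : ConvexOn ℝ univ (fun s : ℝ => f (lineMap y x s)) := by
    refine MonotoneOn.convexOn_of_deriv convex_univ
      (fun s _ => (hq' s).continuousAt.continuousWithinAt)
      (fun s _ => (hq' s).differentiableAt.differentiableWithinAt) ?_
    intro s _ t _ hst
    rw [(hq' s).deriv, (hq' t).deriv, ← sub_nonneg, ← inner_sub_left]
    have h := hmono (lineMap y x t) (lineMap y x s)
    have hsub : lineMap y x t - lineMap y x s = (t - s) • (x - y) := by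
      simp only [lineMap_apply_module']; module
    rw [hsub, real_inner_smul_right] at h
    rcases hst.eq_or_lt with rfl | hlt
    · simp
    · exact nonneg_of_mul_nonneg_right (by linarith) (sub_pos.2 hlt)
  have h := hq.2 (mem_univ 1) (mem_univ 0) ha hb hab
  simp only [smul_eq_mul, mul_one, mul_zero, add_zero, lineMap_apply_one,
    lineMap_apply_zero] at h
  have hpt : lineMap y x a = a • x + b • y := by
    rw [lineMap_apply_module, ← hab, add_sub_cancel_left, add_comm]
  simpa only [hpt, smul_eq_mul] using h

end MonotoneGradient

section ScalarComparison

variable {f f' : ℝ → ℝ} {a b : ℝ}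

lemma monotoneOn_Icc_of_hasDerivWithinAt
    (hf : ∀ t ∈ Icc a b, HasDerivWithinAt f (f' t) (Icc a b) t)
    (hf' : ∀ t ∈ Ioo a b, 0 ≤ f' t) : MonotoneOn f (Icc a b) :=
  monotoneOn_of_hasDerivWithinAt_nonneg (convex_Icc a b)
    (fun t ht => (hf t ht).continuousWithinAt)
    (fun t ht => (hf t (interior_subset ht)).mono interior_subset)
    (by rwa [interior_Icc])

lemma antitoneOn_Icc_of_hasDerivWithinAt
    (hf : ∀ t ∈ Icc a b, HasDerivWithinAt f (f' t) (Icc a b) t)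
    (hf' : ∀ t ∈ Ioo a b, f' t ≤ 0) : AntitoneOn f (Icc a b) :=
  antitoneOn_of_hasDerivWithinAt_nonpos (convex_Icc a b)
    (fun t ht => (hf t ht).continuousWithinAt)
    (fun t ht => (hf t (interior_subset ht)).mono interior_subset)
    (by rwa [interior_Icc])

lemma sq_div_le_of_hasDerivWithinAt {m m' r g : ℝ → ℝ} {T : ℝ}
    (hm : ∀ t ∈ Icc 0 T, HasDerivWithinAt m (m' t) (Icc 0 T) t)
    (hr : ∀ t ∈ Icc 0 T, HasDerivWithinAt r (-m t) (Icc 0 T) t)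
    (hm'g : ∀ t ∈ Icc 0 T, m' t ≤ -g t) (hg : ∀ t ∈ Icc 0 T, 0 ≤ g t)
    (hmrg : ∀ t ∈ Icc 0 T, m t ^ 2 ≤ 2 * r t * g t) (hm0 : m 0 < 0) (hr0 : 0 < r 0)
    {t : ℝ} (ht : t ∈ Icc 0 T) : m 0 ^ 2 / (2 * r 0) ≤ g t := by
  have h0 : (0 : ℝ) ∈ Icc 0 T := left_mem_Icc.2 (ht.1.trans ht.2)
  have hm_neg : ∀ s ∈ Icc 0 T, m s < 0 := by
    have : AntitoneOn m (Icc 0 T) := antitoneOn_Icc_of_hasDerivWithinAt hm fun s hs =>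
      (hm'g s (Ioo_subset_Icc_self hs)).trans (neg_nonpos.2 (hg s (Ioo_subset_Icc_self hs)))
    exact fun s hs => (this h0 hs hs.1).trans_lt hm0
  have hr_pos : ∀ s ∈ Icc 0 T, 0 < r s := by
    have : MonotoneOn r (Icc 0 T) := monotoneOn_Icc_of_hasDerivWithinAt hr fun s hs =>
      neg_nonneg.2 (hm_neg s (Ioo_subset_Icc_self hs)).le
    exact fun s hs => hr0.trans_le (this h0 hs hs.1)
  have hw : MonotoneOn (fun s => m s ^ 2 / r s) (Icc 0 T) := by
    refine monotoneOn_Icc_of_hasDerivWithinAt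
      (fun s hs => ((hm s hs).pow 2).div (hr s hs) (hr_pos s hs).ne') fun s hs => ?_
    replace hs := Ioo_subset_Icc_self hs
    have key : m s ^ 2 ≤ -2 * m' s * r s := by
      nlinarith [hmrg s hs, hm'g s hs, hr_pos s hs]
    refine div_nonneg ?_ (sq_nonneg _)
    norm_num only [Pi.pow_apply, pow_one]
    nlinarith [mul_le_mul_of_nonneg_left key (neg_nonneg.2 (hm_neg s hs).le)]
  have hwt := hw h0 ht ht.1
  rw [div_le_iff₀ (by linarith [hr_pos t ht])]
  have : m t ^ 2 / r t ≤ 2 * g t := by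
    rw [div_le_iff₀ (hr_pos t ht)]; linarith [hmrg t ht]
  calc m 0 ^ 2 = m 0 ^ 2 / r 0 * r 0 := by field_simp
    _ ≤ 2 * g t * r 0 := by gcongr; exact hwt.trans this
    _ = g t * (2 * r 0) := by ring

end ScalarComparison

section ODE

variable {E : Type*} [NormedAddCommGroup E] [NormedSpace ℝ E]
  {v : E → E} {x₀ : E} {b c : ℝ} {γ γ' : ℝ → E}

def IsSolutionOn (v : E → E) (x₀ : E) (b : ℝ) (γ : ℝ → E) : Prop :=
  γ 0 = x₀ ∧ ∀ t ∈ Icc 0 b, HasDerivWithinAt γ (v (γ t)) (Icc 0 b) t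

lemma isSolutionOn_zero : IsSolutionOn v x₀ 0 (fun _ => x₀) := by
  refine ⟨rfl, fun t ht => ?_⟩
  rw [Icc_self] at ht ⊢
  rw [ht, ← hasDerivWithinAt_sdiff_singleton, sdiff_self]
  exact HasFDerivWithinAt.of_notMem_closure (by simp)

namespace IsSolutionOn

lemma continuousOn (h : IsSolutionOn v x₀ b γ) : ContinuousOn γ (Icc 0 b) :=
  fun t ht => (h.2 t ht).continuousWithinAt

lemma mono (h : IsSolutionOn v x₀ b γ) (hc : c ≤ b) : IsSolutionOn v x₀ c γ :=
  ⟨h.1, fun t ht => (h.2 t ⟨ht.1, ht.2.trans hc⟩).mono (Icc_subset_Icc le_rfl hc)⟩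

lemma congr (h : IsSolutionOn v x₀ b γ) (hb : 0 ≤ b) (heq : EqOn γ γ' (Icc 0 b)) :
    IsSolutionOn v x₀ b γ' := by
  refine ⟨heq ⟨le_rfl, hb⟩ ▸ h.1, fun t ht => ?_⟩
  rw [← heq ht]
  exact (h.2 t ht).congr (fun s hs => (heq hs).symm) (heq ht).symm

lemma hasDerivWithinAt_Ici (h : IsSolutionOn v x₀ b γ) {t : ℝ} (ht : t ∈ Ico 0 b) :
    HasDerivWithinAt γ (v (γ t)) (Ici t) t :=
  (h.2 t (Ico_subset_Icc_self ht)).mono_of_mem_nhdsWithin (Icc_mem_nhdsGE_of_mem ht)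

lemma hasDerivAt (h : IsSolutionOn v x₀ b γ) {t : ℝ} (ht : t ∈ Ioo 0 b) :
    HasDerivAt γ (v (γ t)) t :=
  (h.2 t (Ioo_subset_Icc_self ht)).hasDerivAt (Icc_mem_nhds ht.1 ht.2)

lemma eqOn (hv : LocallyLipschitz v) (h : IsSolutionOn v x₀ b γ) (h' : IsSolutionOn v x₀ b γ') :
    EqOn γ γ' (Icc 0 b) := by
  have hC := (isCompact_Icc.image_of_continuousOn h.continuousOn).union
    (isCompact_Icc.image_of_continuousOn h'.continuousOn)
  obtain ⟨K, hK⟩ := hv.locallyLipschitzOn.exists_lipschitzOnWith_of_compact hC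
  exact ODE_solution_unique_of_mem_Icc_right (v := fun _ => v) (fun _ _ => hK)
    h.continuousOn (fun t ht => h.hasDerivWithinAt_Ici ht)
    (fun t ht => Or.inl (mem_image_of_mem γ (Ico_subset_Icc_self ht)))
    h'.continuousOn (fun t ht => h'.hasDerivWithinAt_Ici ht)
    (fun t ht => Or.inr (mem_image_of_mem γ' (Ico_subset_Icc_self ht))) (h.1.trans h'.1.symm)

lemma piecewise (h : IsSolutionOn v x₀ b γ) (hb : 0 ≤ b) (hbc : b ≤ c)
    (h' : ∀ t ∈ Icc b c, HasDerivWithinAt γ' (v (γ' t)) (Icc b c) t) (hγ' : γ' b = γ b) :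
    IsSolutionOn v x₀ c (fun t => if t ≤ b then γ t else γ' t) := by
  set γ'' := fun t => if t ≤ b then γ t else γ' t
  have hleft : ∀ s ∈ Icc 0 b, γ'' s = γ s := fun s hs => if_pos hs.2
  have hright : ∀ s ∈ Icc b c, γ'' s = γ' s := by
    intro s hs
    by_cases hsb : s ≤ b
    · simp only [γ'', le_antisymm hsb hs.1, hγ', ite_self]
    · exact if_neg hsb
  refine ⟨(hleft 0 ⟨le_rfl, hb⟩).trans h.1, fun t ht => ?_⟩
  rw [← Icc_union_Icc_eq_Icc hb hbc]
  refine HasDerivWithinAt.union ?_ ?_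
  · by_cases htb : t ≤ b
    · rw [hleft t ⟨ht.1, htb⟩]
      exact (h.2 t ⟨ht.1, htb⟩).congr hleft (hleft t ⟨ht.1, htb⟩)
    · exact HasFDerivWithinAt.of_notMem_closure (by rw [closure_Icc]; exact fun h => htb h.2)
  · by_cases hbt : b ≤ t
    · rw [hright t ⟨hbt, ht.2⟩]
      exact (h' t ⟨hbt, ht.2⟩).congr hright (hright t ⟨hbt, ht.2⟩)
    · exact HasFDerivWithinAt.of_notMem_closure (by rw [closure_Icc]; exact fun h => hbt h.1)

lemma exists_extension [CompleteSpace E] (hv : ContDiff ℝ 1 v) (h : IsSolutionOn v x₀ b γ)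
    (hb : 0 ≤ b) : ∃ ε > 0, ∃ γ', IsSolutionOn v x₀ (b + ε) γ' := by
  obtain ⟨α, hα0, ε, hε, hα⟩ :=
    hv.contDiffAt.exists_forall_mem_closedBall_exists_eq_forall_mem_Ioo_hasDerivAt₀ (x₀ := γ b) b
  refine ⟨ε / 2, half_pos hε, _, h.piecewise hb (by linarith) (fun t ht => ?_) hα0⟩
  exact (hα t ⟨by linarith [ht.1], by linarith [ht.2]⟩).hasDerivWithinAt

lemma exists_of_forall_lt (hv : LocallyLipschitz v)
    (h : ∀ c ∈ Ico 0 b, ∃ γ, IsSolutionOn v x₀ c γ) :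
    ∃ γ, ∀ c ∈ Ico 0 b, IsSolutionOn v x₀ c γ := by
  choose! Γ hΓ using h
  have hagree : ∀ c₁ ∈ Ico 0 b, ∀ c₂ ∈ Ico 0 b, ∀ t ∈ Icc 0 (min c₁ c₂), Γ c₁ t = Γ c₂ t :=
    fun c₁ h₁ c₂ h₂ => ((hΓ c₁ h₁).mono (min_le_left _ _)).eqOn hv
      ((hΓ c₂ h₂).mono (min_le_right _ _))
  refine ⟨fun t => Γ ((t + b) / 2) t, fun c hc => (hΓ c hc).congr hc.1 fun t ht => ?_⟩
  have hmid : (t + b) / 2 ∈ Ico 0 b := ⟨by linarith [ht.1, hc.1, hc.2], by linarith [ht.2, hc.2]⟩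
  exact hagree c hc _ hmid t ⟨ht.1, le_min ht.2 (by linarith [ht.2, hc.2])⟩

lemma update_of_tendsto (hv : Continuous v) (h : ∀ c ∈ Ico 0 b, IsSolutionOn v x₀ c γ)
    (hb : 0 < b) {z : E} (hz : Tendsto γ (𝓝[<] b) (𝓝 z)) :
    IsSolutionOn v x₀ b (Function.update γ b z) := by
  have heq : ∀ t < b, Function.update γ b z t = γ t := fun t ht => Function.update_of_ne ht.ne _ _
  have hderiv : ∀ t ∈ Ioo 0 b, HasDerivAt (Function.update γ b z) (v (γ t)) t := by
    intro t ht
    have hmid : (t + b) / 2 ∈ Ico 0 b := ⟨by linarith [ht.1], by linarith [ht.2]⟩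
    refine ((h _ hmid).hasDerivAt ⟨ht.1, by linarith [ht.2]⟩).congr_of_eventuallyEq ?_
    filter_upwards [Iio_mem_nhds ht.2] with s hs using heq s hs
  refine ⟨(heq 0 hb).trans (h 0 ⟨le_rfl, hb⟩).1, fun t ht => ?_⟩
  rcases ht.2.lt_or_eq with htb | rfl
  · have hmid : (t + b) / 2 ∈ Ico 0 b := ⟨by linarith [ht.1], by linarith⟩
    have hmem : Icc 0 ((t + b) / 2) ∈ 𝓝[Icc 0 b] t :=
      mem_nhdsWithin.2 ⟨Iio ((t + b) / 2), isOpen_Iio, by simp; linarith,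
        fun s hs => ⟨hs.2.1, hs.1.le⟩⟩
    rw [heq t htb]
    refine (((h _ hmid).2 t ⟨ht.1, by linarith⟩).mono_of_mem_nhdsWithin hmem).congr_of_eventuallyEq
      ?_ (heq t htb)
    filter_upwards [hmem] with s hs using heq s (hs.2.trans_lt hmid.2)
  · have hIoo : Ioo 0 t ∈ 𝓝[<] t := Ioo_mem_nhdsLT hb
    have hlim : Tendsto (deriv (Function.update γ t z)) (𝓝[<] t) (𝓝 (v z)) := by
      refine ((hv.tendsto z).comp hz).congr' ?_
      filter_upwards [hIoo] with s hs using ((hderiv s hs).deriv).symm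
    have hcont : ContinuousWithinAt (Function.update γ t z) (Ioo 0 t) t := by
      rw [ContinuousWithinAt, Function.update_self]
      exact (hz.mono_left (nhdsWithin_mono _ Ioo_subset_Iio_self)).congr'
        (eventually_nhdsWithin_of_forall fun s hs => (heq s hs.2).symm)
    rw [Function.update_self]
    exact (hasDerivWithinAt_Iic_of_tendsto_deriv
      (fun s hs => (hderiv s hs).differentiableAt.differentiableWithinAt) hcont hIoo
      hlim).mono Icc_subset_Iic_self

end IsSolutionOn

end ODE

lemma Ici_subset_of_forall_Ico_subset_mem {S : Set ℝ} {a : ℝ} (hdown : ∀ c ∈ S, Icc a c ⊆ S)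
    (hclosed : ∀ c, a ≤ c → Ico a c ⊆ S → c ∈ S) (hopen : ∀ c ∈ S, a ≤ c → ∃ d > c, d ∈ S) :
    Ici a ⊆ S := by
  intro T hT
  by_contra hTS
  set B := {c | a ≤ c ∧ c ∉ S}
  have hBne : B.Nonempty := ⟨T, hT, hTS⟩
  have hBbdd : BddBelow B := ⟨a, fun c hc => hc.1⟩
  have haβ : a ≤ sInf B := le_csInf hBne fun c hc => hc.1
  have hβ : sInf B ∈ S := hclosed _ haβ fun c hc => by
    by_contra hcS
    exact (csInf_le hBbdd ⟨hc.1, hcS⟩).not_gt hc.2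
  obtain ⟨d, hβd, hdS⟩ := hopen _ hβ haβ
  obtain ⟨c, hcB, hcd⟩ := exists_lt_of_csInf_lt hBne hβd
  exact hcB.2 (hdown d hdS ⟨hcB.1, hcd.le⟩)

lemma exists_tendsto_nhdsLT_of_norm_sub_le {E : Type*} [NormedAddCommGroup E] [CompleteSpace E]
    {f : ℝ → E} {φ : ℝ → ℝ} {a b C L : ℝ} (hab : a < b) (hφ : Tendsto φ (𝓝[<] b) (𝓝 L))
    (hf : ∀ s ∈ Ioo a b, ∀ t ∈ Ioo a b, s ≤ t → ∀ η > 0, ‖f t - f s‖ ≤ η * C + (φ s - φ t) / η) :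
    ∃ z, Tendsto f (𝓝[<] b) (𝓝 z) := by
  refine cauchy_map_iff_exists_tendsto.1 (Metric.cauchy_iff.2 ⟨inferInstance, fun ε hε => ?_⟩)
  set η := ε / (2 * (|C| + 1))
  have hη : 0 < η := by positivity
  have hηC : η * C < ε / 2 := by
    calc η * C ≤ η * |C| := by gcongr; exact le_abs_self C
      _ < ε / 2 := by
        rw [div_mul_eq_mul_div, div_lt_div_iff₀ (by positivity) two_pos]
        nlinarith [abs_nonneg C]
  set U := {t | t ∈ Ioo a b ∧ φ t ∈ ball L (η * ε / 4)}
  have hU : U ∈ 𝓝[<] b :=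
    inter_mem (Ioo_mem_nhdsLT hab) (hφ (ball_mem_nhds L (by positivity)))
  have hbound : ∀ s ∈ U, ∀ t ∈ U, s ≤ t → ‖f t - f s‖ < ε := by
    intro s hs t ht hst
    have hφst : φ s - φ t < η * ε / 2 := by
      have := mem_ball.1 hs.2; have := mem_ball.1 ht.2
      rw [Real.dist_eq, abs_lt] at *
      linarith
    have : (φ s - φ t) / η < ε / 2 := by
      rw [div_lt_iff₀ hη]; linarith
    linarith [hf s hs.1 t ht.1 hst η hη]
  refine ⟨f '' U, image_mem_map hU, ?_⟩
  rintro _ ⟨s, hs, rfl⟩ _ ⟨t, ht, rfl⟩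
  rw [dist_eq_norm]
  rcases le_total s t with hst | hts
  · rw [norm_sub_rev]; exact hbound s hs t ht hst
  · exact hbound t ht s hs hts

section GradientFlow

variable {H : Type*} [NormedAddCommGroup H] [InnerProductSpace ℝ H] [CompleteSpace H]
  {ψ : H → ℝ} {x₀ : H} {b : ℝ} {X : ℝ → H}

namespace IsSolutionOn

lemma hasDerivWithinAt_comp_neg_gradient (h : IsSolutionOn (-gradient ψ) x₀ b X)
    (hψ : Differentiable ℝ ψ) {t : ℝ} (ht : t ∈ Icc 0 b) :
    HasDerivWithinAt (fun s => ψ (X s)) (-‖gradient ψ (X t)‖ ^ 2) (Icc 0 b) t := by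
  have := (hψ (X t)).hasGradientAt.hasFDerivAt.comp_hasDerivWithinAt t (h.2 t ht)
  rwa [Pi.neg_apply, toDual_apply_apply, inner_neg_right, real_inner_self_eq_norm_sq] at this

lemma antitoneOn_comp_neg_gradient (h : IsSolutionOn (-gradient ψ) x₀ b X)
    (hψ : Differentiable ℝ ψ) : AntitoneOn (fun s => ψ (X s)) (Icc 0 b) :=
  antitoneOn_Icc_of_hasDerivWithinAt (fun _ ht => h.hasDerivWithinAt_comp_neg_gradient hψ ht)
    fun _ _ => neg_nonpos.2 (sq_nonneg _)

/-- The speed `‖∇ψ (X r)‖` is at most `η + ‖∇ψ (X r)‖² / η`, and `‖∇ψ (X r)‖²` is the rate at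
which `ψ (X r)` decreases. -/
lemma norm_sub_le_of_neg_gradient (h : IsSolutionOn (-gradient ψ) x₀ b X)
    (hψ : Differentiable ℝ ψ) {s t η : ℝ} (hs : 0 ≤ s) (hst : s ≤ t) (htb : t ≤ b) (hη : 0 < η) :
    ‖X t - X s‖ ≤ η * (t - s) + (ψ (X s) - ψ (X t)) / η := by
  have hsub : Icc s t ⊆ Icc 0 b := Icc_subset_Icc hs htb
  have hB : ∀ r ∈ Icc s t, HasDerivWithinAt (fun r => η * (r - s) + (ψ (X s) - ψ (X r)) / η)
      (η + ‖gradient ψ (X r)‖ ^ 2 / η) (Icc 0 b) r := by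
    intro r hr
    have := (((hasDerivAt_id' r).sub_const s).const_mul η).hasDerivWithinAt.fun_add
      (((h.hasDerivWithinAt_comp_neg_gradient hψ (hsub hr)).const_sub (ψ (X s))).div_const η)
    exact this.congr_deriv (by ring)
  have hIco : ∀ r ∈ Ico s t, r ∈ Ico 0 b := fun r hr => ⟨hs.trans hr.1, hr.2.trans_le htb⟩
  refine image_norm_le_of_norm_deriv_right_le_deriv_boundary' (f := fun r => X r - X s)
    ((h.continuousOn.mono hsub).sub continuousOn_const)
    (fun r hr => (h.hasDerivWithinAt_Ici (hIco r hr)).sub_const (X s)) (by simp)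
    (fun r hr => (hB r hr).continuousWithinAt.mono hsub)
    (fun r hr => (hB r (Ico_subset_Icc_self hr)).mono_of_mem_nhdsWithin
      (Icc_mem_nhdsGE_of_mem (hIco r hr)))
    (fun r _ => ?_) ⟨hst, le_rfl⟩
  rw [Pi.neg_apply, norm_neg, ← sub_nonneg]
  have hg := norm_nonneg (gradient ψ (X r))
  rw [show η + ‖gradient ψ (X r)‖ ^ 2 / η - ‖gradient ψ (X r)‖
    = (‖gradient ψ (X r)‖ ^ 2 - η * ‖gradient ψ (X r)‖ + η ^ 2) / η by field_simp; ring]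
  exact div_nonneg (by nlinarith [sq_nonneg (‖gradient ψ (X r)‖ - η)]) hη.le

end IsSolutionOn

lemma exists_tendsto_of_isSolutionOn_neg_gradient (hψ : Differentiable ℝ ψ)
    (hbdd : BddBelow (range ψ)) (hb : 0 < b)
    (h : ∀ c ∈ Ico 0 b, IsSolutionOn (-gradient ψ) x₀ c X) :
    ∃ z, Tendsto X (𝓝[<] b) (𝓝 z) := by
  have hanti : AntitoneOn (fun s => ψ (X s)) (Ioo 0 b) := fun s hs t ht hst =>
    (h t ⟨ht.1.le, ht.2⟩).antitoneOn_comp_neg_gradient hψ ⟨hs.1.le, hst⟩ ⟨ht.1.le, le_rfl⟩ hst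
  have hφ := hanti.tendsto_nhdsWithin_Ioo_left (nonempty_Ioo.2 hb)
    (hbdd.mono (image_subset_iff.2 fun _ _ => mem_range_self _))
  refine exists_tendsto_nhdsLT_of_norm_sub_le (C := b) hb hφ fun s hs t ht hst η hη => ?_
  calc ‖X t - X s‖ ≤ η * (t - s) + (ψ (X s) - ψ (X t)) / η :=
        (h t ⟨ht.1.le, ht.2⟩).norm_sub_le_of_neg_gradient hψ hs.1.le hst le_rfl hη
    _ ≤ η * b + (ψ (X s) - ψ (X t)) / η := by gcongr; linarith [hs.1, ht.2]

lemma exists_isSolutionOn_neg_gradient (hψ : ContDiff ℝ 2 ψ) (hbdd : BddBelow (range ψ))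
    (x₀ : H) {T : ℝ} (hT : 0 ≤ T) : ∃ X, IsSolutionOn (-gradient ψ) x₀ T X := by
  have hv : ContDiff ℝ 1 (-gradient ψ) := (ContDiff.gradient (n := 1) hψ).neg
  refine Ici_subset_of_forall_Ico_subset_mem (S := {c | ∃ X, IsSolutionOn (-gradient ψ) x₀ c X})
    (fun c ⟨X, hX⟩ d hd => ⟨X, hX.mono hd.2⟩) (fun c hc hsub => ?_)
    (fun c ⟨X, hX⟩ hc => ?_) hT
  · rcases hc.eq_or_lt with rfl | hc
    · exact ⟨_, isSolutionOn_zero⟩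
    obtain ⟨X, hX⟩ := IsSolutionOn.exists_of_forall_lt hv.locallyLipschitz hsub
    obtain ⟨z, hz⟩ := exists_tendsto_of_isSolutionOn_neg_gradient
      (hψ.differentiable two_ne_zero) hbdd hc hX
    exact ⟨_, IsSolutionOn.update_of_tendsto hv.continuous hX hc hz⟩
  · obtain ⟨ε, hε, Y, hY⟩ := hX.exists_extension hv hc
    exact ⟨c + ε, by linarith, Y, hY⟩

end GradientFlow

section TwoFlows

variable {H : Type*} [NormedAddCommGroup H] [InnerProductSpace ℝ H]
  {g : H → H} {x₀ y₀ : H} {b t : ℝ} {X Y : ℝ → H}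

namespace IsSolutionOn

lemma hasDerivWithinAt_inner_sub (hg : Differentiable ℝ g) (hX : IsSolutionOn (-g) x₀ b X)
    (hY : IsSolutionOn (-g) y₀ b Y) (ht : t ∈ Icc 0 b) :
    HasDerivWithinAt (fun s => ⟪g (X s) - g (Y s), X s - Y s⟫)
      (-⟪fderiv ℝ g (X t) (g (X t)) - fderiv ℝ g (Y t) (g (Y t)), X t - Y t⟫
        - ‖g (X t) - g (Y t)‖ ^ 2) (Icc 0 b) t := by
  have hG := ((hg (X t)).hasFDerivAt.comp_hasDerivWithinAt t (hX.2 t ht)).fun_sub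
    ((hg (Y t)).hasFDerivAt.comp_hasDerivWithinAt t (hY.2 t ht))
  refine (hG.inner ℝ ((hX.2 t ht).fun_sub (hY.2 t ht))).congr_deriv ?_
  simp only [Pi.neg_apply, Function.comp_apply, map_neg, neg_sub_neg]
  rw [← neg_sub (g (X t)), inner_neg_right, real_inner_self_eq_norm_sq,
    ← neg_sub (fderiv ℝ g (X t) _), inner_neg_left]
  ring

lemma hasDerivWithinAt_half_norm_sq_sub (hX : IsSolutionOn (-g) x₀ b X)
    (hY : IsSolutionOn (-g) y₀ b Y) (ht : t ∈ Icc 0 b) :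
    HasDerivWithinAt (fun s => 1 / 2 * ‖X s - Y s‖ ^ 2) (-⟪g (X t) - g (Y t), X t - Y t⟫)
      (Icc 0 b) t := by
  refine (((hX.2 t ht).fun_sub (hY.2 t ht)).norm_sq.const_mul (1 / 2)).congr_deriv ?_
  rw [Pi.neg_apply, Pi.neg_apply, neg_sub_neg, ← neg_sub (g (X t)), inner_neg_right,
    real_inner_comm]
  ring

end IsSolutionOn

end TwoFlows

section Main

variable {H : Type*} [NormedAddCommGroup H] [InnerProductSpace ℝ H] [CompleteSpace H]
  {ψ : H → ℝ}

lemma div_le_norm_gradient_sub_sq (hψ : ContDiff ℝ 2 ψ)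
    (hV : ConvexOn ℝ univ (fun x => (1 / 2 : ℝ) * ‖gradient ψ x‖ ^ 2)) {x y : H} {T t : ℝ}
    {X Y : ℝ → H} (hX : IsSolutionOn (-gradient ψ) x T X) (hY : IsSolutionOn (-gradient ψ) y T Y)
    (hneg : ⟪gradient ψ x - gradient ψ y, x - y⟫ < 0) (ht : t ∈ Icc 0 T) :
    ⟪gradient ψ x - gradient ψ y, x - y⟫ ^ 2 / ‖x - y‖ ^ 2
      ≤ ‖gradient ψ (X t) - gradient ψ (Y t)‖ ^ 2 := by
  have hg := (ContDiff.gradient (n := 1) hψ).differentiable one_ne_zero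
  have hxy : x - y ≠ 0 := fun h => by simp [h] at hneg
  have hmrg : ∀ s, ⟪gradient ψ (X s) - gradient ψ (Y s), X s - Y s⟫ ^ 2
      ≤ 2 * (1 / 2 * ‖X s - Y s‖ ^ 2) * ‖gradient ψ (X s) - gradient ψ (Y s)‖ ^ 2 := by
    intro s
    have := real_inner_mul_inner_self_le (gradient ψ (X s) - gradient ψ (Y s)) (X s - Y s)
    rw [real_inner_self_eq_norm_sq, real_inner_self_eq_norm_sq] at this
    nlinarith
  have key := sq_div_le_of_hasDerivWithinAt
    (g := fun s => ‖gradient ψ (X s) - gradient ψ (Y s)‖ ^ 2)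
    (fun s hs => hX.hasDerivWithinAt_inner_sub hg hY hs)
    (fun s hs => hX.hasDerivWithinAt_half_norm_sq_sub hY hs)
    (fun s _ => by
      linarith [hV.inner_gradient_sub_nonneg (hasGradientAt_half_norm_sq_gradient hψ) (X s) (Y s)])
    (fun _ _ => sq_nonneg _) (fun s _ => hmrg s) (by simpa [hX.1, hY.1] using hneg)
    (by simp [hX.1, hY.1, hxy]) ht
  simpa [hX.1, hY.1, ← mul_assoc] using key

lemma inner_gradient_sub_nonneg_of_convexOn (hψ : ContDiff ℝ 2 ψ) (hbdd : BddBelow (range ψ))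
    (hV : ConvexOn ℝ univ (fun x => (1 / 2 : ℝ) * ‖gradient ψ x‖ ^ 2)) (x y : H) :
    0 ≤ ⟪gradient ψ x - gradient ψ y, x - y⟫ := by
  by_contra! hneg
  obtain ⟨μ, hμ⟩ := hbdd
  have hψμ : ∀ z, μ ≤ ψ z := fun z => hμ (mem_range_self z)
  set κ := ⟪gradient ψ x - gradient ψ y, x - y⟫ ^ 2 / ‖x - y‖ ^ 2
  have hκ : 0 < κ := by
    have : 0 < ‖x - y‖ := norm_pos_iff.2 fun h => by simp [h] at hneg
    exact div_pos (sq_pos_of_neg hneg) (by positivity)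
  set T := (2 * (ψ x - μ) + 2 * (ψ y - μ) + 1) / κ
  have hT : 0 < T := div_pos (by linarith [hψμ x, hψμ y]) hκ
  obtain ⟨X, hX⟩ := exists_isSolutionOn_neg_gradient hψ ⟨μ, hμ⟩ x hT.le
  obtain ⟨Y, hY⟩ := exists_isSolutionOn_neg_gradient hψ ⟨μ, hμ⟩ y hT.le
  have hψ' := hψ.differentiable two_ne_zero
  have hanti : AntitoneOn (fun t => 2 * ψ (X t) + 2 * ψ (Y t) + κ * t) (Icc 0 T) := by
    refine antitoneOn_Icc_of_hasDerivWithinAt (fun t ht =>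
      ((((hX.hasDerivWithinAt_comp_neg_gradient hψ' ht).const_mul 2).fun_add
        ((hY.hasDerivWithinAt_comp_neg_gradient hψ' ht).const_mul 2)).fun_add
        ((hasDerivAt_id' t).const_mul κ).hasDerivWithinAt)) fun t ht => ?_
    have hlow := div_le_norm_gradient_sub_sq hψ hV hX hY hneg (Ioo_subset_Icc_self ht)
    have := norm_sub_le (gradient ψ (X t)) (gradient ψ (Y t))
    nlinarith [norm_nonneg (gradient ψ (X t) - gradient ψ (Y t)),
      sq_nonneg (‖gradient ψ (X t)‖ - ‖gradient ψ (Y t)‖)]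
  have hend := hanti (left_mem_Icc.2 hT.le) (right_mem_Icc.2 hT.le) hT.le
  have hκT : κ * T = 2 * (ψ x - μ) + 2 * (ψ y - μ) + 1 := mul_div_cancel₀ _ hκ.ne'
  simp only [hX.1, hY.1, mul_zero, add_zero] at hend
  linarith [hψμ (X T), hψμ (Y T)]

end Main

/-- Corollary (convexity criterium): if `ψ` is a `C²` function bounded from below and
`V = ½‖∇ψ‖²` is convex, then `ψ` is convex. -/
theorem stmt_18 {H : Type*} [NormedAddCommGroup H] [InnerProductSpace ℝ H] [CompleteSpace H]
    (ψ : H → ℝ) (hψ : ContDiff ℝ 2 ψ)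
    (hbdd : BddBelow (range ψ))
    (hVconv : ConvexOn ℝ univ (fun x => (1/2 : ℝ) * ‖gradient ψ x‖ ^ 2)) :
    ConvexOn ℝ univ ψ :=
  convexOn_univ_of_inner_gradient_sub_nonneg
    (fun x => (hψ.differentiable two_ne_zero x).hasGradientAt)
    (inner_gradient_sub_nonneg_of_convexOn hψ hbdd hVconv)
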